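/- For every τ ∈ ℍ = {τ ∈ ℂ : Im τ > 0} and q ∈ ℂ∖{0}, set μ = 4·conj(q)·(Im τ)². Then: (a) the Wirtinger (1,0)-partial derivatives of N(τ, q) = (2·|q|·Im τ)² at (τ, q) are ∂N/∂τ = −4i·|q|²·Im τ and ∂N/∂q = 4·conj(q)·(Im τ)²; (b) the Wirtinger (1,0)-partial derivatives of T(τ, μ) = (|μ|/(2·Im τ))² at the point (τ, μ) are ∂T/∂τ = 4i·|q|²·Im τ and ∂T/∂μ = q. Consequently, writing the dualization as dual(α, β) = (β, −α) and the switch as sending a tangent vector (α, β) at (τ, q) to the covector (β, q) at (τ, α), one has Swh(dual⁻¹(−∂N|_{(τ,q)})) = ∂T|_{(τ,μ)}; this is the infinitesimal duality between the L¹-norm function and the Teichmüller metric in the torus case. -/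

import Mathlib

noncomputable section

/-- The Wirtinger `(1,0)`-partial derivative in the first variable,
`∂f/∂τ = ½(∂f/∂x − i·∂f/∂y)`, of a real-valued function `f : ℂ × ℂ → ℝ`. -/
def wFst (f : ℂ × ℂ → ℝ) (p : ℂ × ℂ) : ℂ :=
  (1 / 2 : ℂ) *
    (((fderiv ℝ f p ((1 : ℂ), (0 : ℂ)) : ℝ) : ℂ)
      - Complex.I * ((fderiv ℝ f p (Complex.I, (0 : ℂ)) : ℝ) : ℂ))

/-- The Wirtinger `(1,0)`-partial derivative in the second variable of a real-valued
function `f : ℂ × ℂ → ℝ`. -/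
def wSnd (f : ℂ × ℂ → ℝ) (p : ℂ × ℂ) : ℂ :=
  (1 / 2 : ℂ) *
    (((fderiv ℝ f p ((0 : ℂ), (1 : ℂ)) : ℝ) : ℂ)
      - Complex.I * ((fderiv ℝ f p ((0 : ℂ), Complex.I) : ℝ) : ℂ))

end

noncomputable section

/-- The square `N(τ, q) = (2·|q|·Im τ)²` of the L¹-norm function for tori. -/
def torusL1NormSq (p : ℂ × ℂ) : ℝ := (2 * ‖p.2‖ * p.1.im) ^ 2

/-- The square `T(τ, μ) = (|μ|/(2·Im τ))²` of the Teichmüller metric for tori. -/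
def torusTeichMetricSq (p : ℂ × ℂ) : ℝ := (‖p.2‖ / (2 * p.1.im)) ^ 2

/-- The inverse of the dualization `dual(α, β) = (β, −α)` on fibers. -/
def dualInv (v : ℂ × ℂ) : ℂ × ℂ := (-v.2, v.1)

/-- The switch, sending a tangent vector `(α, β)` at the point `(τ, q)` to the covector
`(β, q)` at the point `(τ, α)`. -/
def swh (pv : (ℂ × ℂ) × (ℂ × ℂ)) : (ℂ × ℂ) × (ℂ × ℂ) :=
  ((pv.1.1, pv.2.1), (pv.2.2, pv.1.2))

/-!
For a real-valued `f`, `df(v) = 2 Re(∂f/∂τ · v₁ + ∂f/∂q · v₂)`, so the Wirtinger derivatives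
are read off the real differential. With `y = Im τ` we have `N = 4|q|²y²` and
`T = |μ|²/(4y²)`; since `d|q|² = 2 Re(q̄ dq)` and `dy = Re(−i dτ)`, this gives
`∂N = (−4i|q|²y, 4q̄y²)` and `∂T = (i|μ|²/(4y³), μ̄/(4y²))`. At `μ = 4q̄y²` we have
`|μ| = 4|q|y²` and `μ̄ = 4qy²`, so `∂T = (4i|q|²y, q)`, and the duality is a rearrangement.
-/

open Complex ComplexConjugate

theorem wFst_eq_of_fderiv_apply {f : ℂ × ℂ → ℝ} {p : ℂ × ℂ} {a b : ℂ}
    (h : ∀ v : ℂ × ℂ, fderiv ℝ f p v = (a * v.1 + b * v.2).re) : wFst f p = a / 2 := by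
  apply Complex.ext <;> simp [wFst, h, div_eq_inv_mul]

theorem wSnd_eq_of_fderiv_apply {f : ℂ × ℂ → ℝ} {p : ℂ × ℂ} {a b : ℂ}
    (h : ∀ v : ℂ × ℂ, fderiv ℝ f p v = (a * v.1 + b * v.2).re) : wSnd f p = b / 2 := by
  apply Complex.ext <;> simp [wSnd, h, div_eq_inv_mul]

theorem hasFDerivAt_im_fst (p : ℂ × ℂ) :
    HasFDerivAt (fun p : ℂ × ℂ => p.1.im) (imCLM.comp (ContinuousLinearMap.fst ℝ ℂ ℂ)) p :=
  (imCLM.comp (ContinuousLinearMap.fst ℝ ℂ ℂ)).hasFDerivAt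

theorem fderiv_torusL1NormSq_apply (p v : ℂ × ℂ) :
    fderiv ℝ torusL1NormSq p v =
      (-8 * I * ‖p.2‖ ^ 2 * p.1.im * v.1 + 8 * conj p.2 * p.1.im ^ 2 * v.2).re := by
  have hN : torusL1NormSq = fun p => 4 * (‖p.2‖ ^ 2 * p.1.im ^ 2) := by
    funext p; simp only [torusL1NormSq]; ring
  have hd : HasFDerivAt (fun p : ℂ × ℂ => 4 * (‖p.2‖ ^ 2 * p.1.im ^ 2)) _ p :=
    (hasFDerivAt_snd.norm_sq.mul ((hasFDerivAt_im_fst p).pow 2)).const_mul 4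
  rw [hN, hd.fderiv]
  simp [Complex.inner, ← ofReal_pow]
  ring

theorem fderiv_torusTeichMetricSq_apply (p : ℂ × ℂ) (hp : p.1.im ≠ 0) (v : ℂ × ℂ) :
    fderiv ℝ torusTeichMetricSq p v =
      (((‖p.2‖ ^ 2 / (2 * p.1.im ^ 3) : ℝ) : ℂ) * I * v.1
        + (((2 * p.1.im ^ 2)⁻¹ : ℝ) : ℂ) * conj p.2 * v.2).re := by
  have hT : torusTeichMetricSq = fun p => ‖p.2‖ ^ 2 * (4 * p.1.im ^ 2)⁻¹ := by
    funext p; simp only [torusTeichMetricSq]; ring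
  have hg : HasDerivAt (fun y : ℝ => (4 * y ^ 2)⁻¹) (-(2 * p.1.im ^ 3)⁻¹) p.1.im :=
    (((hasDerivAt_pow 2 p.1.im).const_mul 4).fun_inv (by positivity)).congr_deriv (by
      field_simp; ring)
  have hd : HasFDerivAt (fun p : ℂ × ℂ => ‖p.2‖ ^ 2 * (4 * p.1.im ^ 2)⁻¹) _ p :=
    hasFDerivAt_snd.norm_sq.mul (hg.comp_hasFDerivAt (f := fun p : ℂ × ℂ => p.1.im) p
      (hasFDerivAt_im_fst p))
  rw [hT, hd.fderiv, mul_assoc, mul_assoc, add_re, re_ofReal_mul, re_ofReal_mul]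
  simp [Complex.inner]
  field_simp
  ring

theorem wFst_torusL1NormSq (p : ℂ × ℂ) :
    wFst torusL1NormSq p = -4 * I * ‖p.2‖ ^ 2 * p.1.im := by
  rw [wFst_eq_of_fderiv_apply (fderiv_torusL1NormSq_apply p)]
  ring

theorem wSnd_torusL1NormSq (p : ℂ × ℂ) :
    wSnd torusL1NormSq p = 4 * conj p.2 * p.1.im ^ 2 := by
  rw [wSnd_eq_of_fderiv_apply (fderiv_torusL1NormSq_apply p)]
  ring

theorem wFst_torusTeichMetricSq (p : ℂ × ℂ) (hp : p.1.im ≠ 0) :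
    wFst torusTeichMetricSq p = I * ‖p.2‖ ^ 2 / (4 * p.1.im ^ 3) := by
  rw [wFst_eq_of_fderiv_apply (fderiv_torusTeichMetricSq_apply p hp)]
  push_cast
  ring

theorem wSnd_torusTeichMetricSq (p : ℂ × ℂ) (hp : p.1.im ≠ 0) :
    wSnd torusTeichMetricSq p = conj p.2 / (4 * p.1.im ^ 2) := by
  rw [wSnd_eq_of_fderiv_apply (fderiv_torusTeichMetricSq_apply p hp)]
  push_cast
  ring

theorem torus_infinitesimal_duality_general (τ q μ : ℂ) (hτ : 0 < τ.im)
    (hμ : μ = 4 * (starRingEnd ℂ) q * (τ.im : ℂ) ^ 2) :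
    (wFst torusL1NormSq (τ, q) = -4 * Complex.I * (‖q‖ : ℂ) ^ 2 * (τ.im : ℂ) ∧
      wSnd torusL1NormSq (τ, q) = 4 * (starRingEnd ℂ) q * (τ.im : ℂ) ^ 2) ∧
    (wFst torusTeichMetricSq (τ, μ) =
        4 * Complex.I * (‖q‖ : ℂ) ^ 2 * (τ.im : ℂ) ∧
      wSnd torusTeichMetricSq (τ, μ) = q) ∧
    swh ((τ, q), dualInv (-(wFst torusL1NormSq (τ, q)), -(wSnd torusL1NormSq (τ, q)))) =
      ((τ, μ), (wFst torusTeichMetricSq (τ, μ), wSnd torusTeichMetricSq (τ, μ))) := by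
  have hy : (τ, μ).1.im ≠ 0 := hτ.ne'
  have hyC : (τ.im : ℂ) ≠ 0 := ofReal_ne_zero.mpr hτ.ne'
  have hnorm : ‖μ‖ = 4 * ‖q‖ * τ.im ^ 2 := by simp [hμ, abs_of_pos hτ]
  have hconj : conj μ = 4 * q * τ.im ^ 2 := by simp [hμ, map_ofNat]
  have hNτ := wFst_torusL1NormSq (τ, q)
  have hNq := wSnd_torusL1NormSq (τ, q)
  have hTτ : wFst torusTeichMetricSq (τ, μ) = 4 * I * ‖q‖ ^ 2 * τ.im := by
    rw [wFst_torusTeichMetricSq _ hy, hnorm]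
    field_simp
    push_cast
    ring
  have hTμ : wSnd torusTeichMetricSq (τ, μ) = q := by
    rw [wSnd_torusTeichMetricSq _ hy, hconj]
    field_simp
  refine ⟨⟨hNτ, hNq⟩, ⟨hTτ, hTμ⟩, ?_⟩
  simp only [swh, dualInv, hNq, hNτ, hTτ, hTμ, ← hμ, neg_neg, neg_mul]

/-- **Infinitesimal duality between the L¹-norm function and the Teichmüller metric in
the torus case.**  For `τ ∈ ℍ`, `q ≠ 0` and `μ = 4·conj q·(Im τ)²` (the Teichmüller–
Beltrami image): (a) `∂N/∂τ = −4i·|q|²·Im τ`, `∂N/∂q = 4·conj q·(Im τ)²` at `(τ, q)`;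
(b) `∂T/∂τ = 4i·|q|²·Im τ`, `∂T/∂μ = q` at `(τ, μ)`; consequently
`Swh (dual⁻¹ (−∂N|_{(τ,q)})) = ∂T|_{(τ,μ)}`. -/
theorem torus_infinitesimal_duality (τ q μ : ℂ) (hτ : 0 < τ.im) (hq : q ≠ 0)
    (hμ : μ = 4 * (starRingEnd ℂ) q * (τ.im : ℂ) ^ 2) :
    (wFst torusL1NormSq (τ, q) = -4 * Complex.I * (‖q‖ : ℂ) ^ 2 * (τ.im : ℂ) ∧
      wSnd torusL1NormSq (τ, q) = 4 * (starRingEnd ℂ) q * (τ.im : ℂ) ^ 2) ∧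
    (wFst torusTeichMetricSq (τ, μ) =
        4 * Complex.I * (‖q‖ : ℂ) ^ 2 * (τ.im : ℂ) ∧
      wSnd torusTeichMetricSq (τ, μ) = q) ∧
    swh ((τ, q), dualInv (-(wFst torusL1NormSq (τ, q)), -(wSnd torusL1NormSq (τ, q)))) =
      ((τ, μ), (wFst torusTeichMetricSq (τ, μ), wSnd torusTeichMetricSq (τ, μ))) :=
  torus_infinitesimal_duality_general τ q μ hτ hμ

end
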